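/- arXiv:2006.05053 — 4 statements merged into one kernel-verified Lean document; each statement's English description precedes it below -/
import Mathlib

section
/- The map Υ : VSLAM_n(3) × T̊_n(3) → T̊_n(3) defined by Υ((A,(Q,a)_i),(P,p_i)) = (PA, (a_i⁻¹ R_{PA} Q_iᵀ R_Pᵀ(p_i − x_P) + x_{PA})_i) is a right group action: Υ(id, (P,p_i)) = (P,p_i) for all (P,p_i), and Υ((A₁,(Q₁,a₁)_i), Υ((A₂,(Q₂,a₂)_i), (P,p_i))) = Υ((A₂A₁,(Q₂Q₁, a₂a₁)_i), (P,p_i)) for all group elements and all (P,p_i) ∈ T̊_n(3). -/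
open Matrix

/-- The action `Υ` of `VSLAM_n(3)` on the total space.  An element of `SE(3)` is a pair
`(R, x)` of a rotation matrix and a translation vector, with `PA = (R_P * R_A, R_P x_A + x_P)`.
The group element is `(A, xA, (Q i, a i)_i)` and the point is `((P, xP), p)`. -/
noncomputable def Upsilon (n : ℕ)
    (A : Matrix (Fin 3) (Fin 3) ℝ) (xA : Fin 3 → ℝ)
    (Q : Fin n → Matrix (Fin 3) (Fin 3) ℝ) (a : Fin n → ℝ)
    (P : Matrix (Fin 3) (Fin 3) ℝ) (xP : Fin 3 → ℝ) (p : Fin n → Fin 3 → ℝ) :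
    (Matrix (Fin 3) (Fin 3) ℝ × (Fin 3 → ℝ)) × (Fin n → Fin 3 → ℝ) :=
  ((P * A, P *ᵥ xA + xP),
    fun i => (a i)⁻¹ • ((P * A) *ᵥ ((Q i)ᵀ *ᵥ (Pᵀ *ᵥ (p i - xP)))) + (P *ᵥ xA + xP))

/-!
Writing `y = R_Pᵀ (p - x_P)` for the coordinates of a landmark `p` in the frame `P`, the action
`Υ` multiplies the frame by `A` and replaces the body-frame coordinates `y` by `a⁻¹ Qᵀ y`.
Since `R_P R_A` is orthogonal, this description can be read back off the image, so acting twice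
replaces `y` by `a₁⁻¹ Q₁ᵀ (a₂⁻¹ Q₂ᵀ y) = (a₂ a₁)⁻¹ (Q₂ Q₁)ᵀ y`, and the frames compose in `SE(3)`.
-/

def bodyCoord (P : Matrix (Fin 3) (Fin 3) ℝ) (xP q : Fin 3 → ℝ) : Fin 3 → ℝ :=
  Pᵀ *ᵥ (q - xP)

theorem transpose_mul_self_mul_eq_one {m R : Type*} [Fintype m] [DecidableEq m] [CommRing R]
    {P A : Matrix m m R} (hP : Pᵀ * P = 1) (hA : Aᵀ * A = 1) : (P * A)ᵀ * (P * A) = 1 :=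
  (mem_orthogonalGroup_iff' m R).mp
    (mul_mem ((mem_orthogonalGroup_iff' m R).mpr hP) ((mem_orthogonalGroup_iff' m R).mpr hA))

section Upsilon

variable {n : ℕ} {A P : Matrix (Fin 3) (Fin 3) ℝ} {xA xP : Fin 3 → ℝ}
  {Q : Fin n → Matrix (Fin 3) (Fin 3) ℝ} {a : Fin n → ℝ} {p : Fin n → Fin 3 → ℝ}

theorem upsilon_snd_apply (i : Fin n) :
    (Upsilon n A xA Q a P xP p).2 i =
      (a i)⁻¹ • ((P * A) *ᵥ ((Q i)ᵀ *ᵥ bodyCoord P xP (p i))) + (P *ᵥ xA + xP) :=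
  rfl

theorem bodyCoord_upsilon (hPA : (P * A)ᵀ * (P * A) = 1) (i : Fin n) :
    bodyCoord (Upsilon n A xA Q a P xP p).1.1 (Upsilon n A xA Q a P xP p).1.2
        ((Upsilon n A xA Q a P xP p).2 i) =
      (a i)⁻¹ • ((Q i)ᵀ *ᵥ bodyCoord P xP (p i)) := by
  rw [upsilon_snd_apply]
  simp only [bodyCoord, Upsilon]
  rw [add_sub_cancel_right, mulVec_smul, mulVec_mulVec, hPA, one_mulVec]

theorem upsilon_one (hP : Pᵀ * P = 1) :
    Upsilon n 1 0 (fun _ => 1) (fun _ => 1) P xP p = ((P, xP), p) := by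
  have hPPt : P * Pᵀ = 1 := mul_eq_one_comm.mp hP
  refine Prod.ext (Prod.ext (mul_one P) (by simp [Upsilon])) (funext fun i => ?_)
  rw [upsilon_snd_apply]
  simp [bodyCoord, mulVec_mulVec, hPPt]

theorem upsilon_upsilon {A₁ A₂ : Matrix (Fin 3) (Fin 3) ℝ} {xA₁ xA₂ : Fin 3 → ℝ}
    {Q₁ Q₂ : Fin n → Matrix (Fin 3) (Fin 3) ℝ} {a₁ a₂ : Fin n → ℝ}
    (hP : Pᵀ * P = 1) (hA₂ : A₂ᵀ * A₂ = 1) :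
    Upsilon n A₁ xA₁ Q₁ a₁
        (Upsilon n A₂ xA₂ Q₂ a₂ P xP p).1.1 (Upsilon n A₂ xA₂ Q₂ a₂ P xP p).1.2
        (Upsilon n A₂ xA₂ Q₂ a₂ P xP p).2
      = Upsilon n (A₂ * A₁) (A₂ *ᵥ xA₁ + xA₂) (fun i => Q₂ i * Q₁ i)
          (fun i => a₂ i * a₁ i) P xP p := by
  refine Prod.ext (Prod.ext (mul_assoc P A₂ A₁) ?_) (funext fun i => ?_)
  · show (P * A₂) *ᵥ xA₁ + (P *ᵥ xA₂ + xP) = P *ᵥ (A₂ *ᵥ xA₁ + xA₂) + xP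
    rw [mulVec_add, mulVec_mulVec, add_assoc]
  · rw [upsilon_snd_apply, bodyCoord_upsilon (transpose_mul_self_mul_eq_one hP hA₂),
      upsilon_snd_apply]
    simp only [Upsilon, mulVec_smul, smul_smul, mulVec_mulVec, transpose_mul, mulVec_add,
      mul_assoc, _root_.mul_inv_rev]
    abel

end Upsilon

theorem upsilon_is_right_action_general (n : ℕ)
    (A₁ A₂ : Matrix (Fin 3) (Fin 3) ℝ) (xA₁ xA₂ : Fin 3 → ℝ)
    (Q₁ Q₂ : Fin n → Matrix (Fin 3) (Fin 3) ℝ) (a₁ a₂ : Fin n → ℝ)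
    (P : Matrix (Fin 3) (Fin 3) ℝ) (xP : Fin 3 → ℝ) (p : Fin n → Fin 3 → ℝ)
    (hA₂ : A₂ᵀ * A₂ = 1 ∧ A₂.det = 1)
    (hP : Pᵀ * P = 1 ∧ P.det = 1) :
    Upsilon n 1 0 (fun _ => 1) (fun _ => 1) P xP p = ((P, xP), p) ∧
    Upsilon n A₁ xA₁ Q₁ a₁
        (Upsilon n A₂ xA₂ Q₂ a₂ P xP p).1.1 (Upsilon n A₂ xA₂ Q₂ a₂ P xP p).1.2
        (Upsilon n A₂ xA₂ Q₂ a₂ P xP p).2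
      = Upsilon n (A₂ * A₁) (A₂ *ᵥ xA₁ + xA₂) (fun i => Q₂ i * Q₁ i)
          (fun i => a₂ i * a₁ i) P xP p :=
  ⟨upsilon_one hP.1, upsilon_upsilon hP.1 hA₂.1⟩

/-- `Υ` is a right group action of `VSLAM_n(3)` on the total space `T̊_n(3)`:
the identity acts trivially, and
`Υ(X₁, Υ(X₂, ξ)) = Υ(X₂ · X₁, ξ)` where
`X₂ · X₁ = (A₂A₁, (Q₂Q₁, a₂a₁)_i)` with `A₂A₁ = (R_{A₂}R_{A₁}, R_{A₂}x_{A₁} + x_{A₂})`. -/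
theorem upsilon_is_right_action (n : ℕ)
    (A₁ A₂ : Matrix (Fin 3) (Fin 3) ℝ) (xA₁ xA₂ : Fin 3 → ℝ)
    (Q₁ Q₂ : Fin n → Matrix (Fin 3) (Fin 3) ℝ) (a₁ a₂ : Fin n → ℝ)
    (P : Matrix (Fin 3) (Fin 3) ℝ) (xP : Fin 3 → ℝ) (p : Fin n → Fin 3 → ℝ)
    (hA₁ : A₁ᵀ * A₁ = 1 ∧ A₁.det = 1) (hA₂ : A₂ᵀ * A₂ = 1 ∧ A₂.det = 1)
    (hQ₁ : ∀ i, (Q₁ i)ᵀ * Q₁ i = 1 ∧ (Q₁ i).det = 1)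
    (hQ₂ : ∀ i, (Q₂ i)ᵀ * Q₂ i = 1 ∧ (Q₂ i).det = 1)
    (ha₁ : ∀ i, 0 < a₁ i) (ha₂ : ∀ i, 0 < a₂ i)
    (hP : Pᵀ * P = 1 ∧ P.det = 1)
    (hp : ∀ i, p i ≠ xP) :
    Upsilon n 1 0 (fun _ => 1) (fun _ => 1) P xP p = ((P, xP), p) ∧
    Upsilon n A₁ xA₁ Q₁ a₁
        (Upsilon n A₂ xA₂ Q₂ a₂ P xP p).1.1 (Upsilon n A₂ xA₂ Q₂ a₂ P xP p).1.2
        (Upsilon n A₂ xA₂ Q₂ a₂ P xP p).2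
      = Upsilon n (A₂ * A₁) (A₂ *ᵥ xA₁ + xA₂) (fun i => Q₂ i * Q₁ i)
          (fun i => a₂ i * a₁ i) P xP p :=
  upsilon_is_right_action_general n A₁ A₂ xA₁ xA₂ Q₁ Q₂ a₁ a₂ P xP p hA₂ hP
end

section
/- The combined bearing output h is equivariant with respect to the actions Υ and ρ: for any X = (A,(Q,a)_i) ∈ VSLAM_n(3) and any ξ = (P, p_i) ∈ T̊_n(3), h(Υ(X, ξ)) = ρ(X, h(ξ)); componentwise, h^i applied to the i-th landmark of Υ(X,ξ) equals Q_iᵀ h^i(P, p_i). -/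
open Matrix

/-- The Euclidean norm of a vector in `ℝ³`. -/
noncomputable def enorm3 (v : Fin 3 → ℝ) : ℝ := ‖(EuclideanSpace.equiv (Fin 3) ℝ).symm v‖

/-- The bearing output `h^i(P, p) = R_Pᵀ(p − x_P)/‖p − x_P‖`. -/
noncomputable def bearing (R : Matrix (Fin 3) (Fin 3) ℝ) (x p : Fin 3 → ℝ) : Fin 3 → ℝ :=
  (enorm3 (p - x))⁻¹ • (Rᵀ *ᵥ (p - x))

/-!
Both sides are the unit vector in the direction of `Q_iᵀ R_Pᵀ (p_i − x_P)`. On the left, the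
frame `PA` undoes the rotation `R_{PA}` in the new landmark, the translation `x_{PA}` cancels, and
the positive scale `a_i⁻¹` disappears under normalisation; on the right, rotations commute with
normalisation because they preserve the Euclidean norm.
-/

/-- The unit vector in the direction of `v`, with the junk value `0` at `v = 0`. -/
noncomputable def normalize3 (v : Fin 3 → ℝ) : Fin 3 → ℝ := (enorm3 v)⁻¹ • v

lemma enorm3_eq_sqrt_dotProduct (v : Fin 3 → ℝ) : enorm3 v = √(v ⬝ᵥ v) := by
  rw [enorm3, EuclideanSpace.norm_eq]
  simp [dotProduct, sq]

lemma enorm3_smul (c : ℝ) (v : Fin 3 → ℝ) : enorm3 (c • v) = |c| * enorm3 v := by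
  simp [enorm3, norm_smul]

lemma enorm3_mulVec {M : Matrix (Fin 3) (Fin 3) ℝ} (hM : Mᵀ * M = 1) (v : Fin 3 → ℝ) :
    enorm3 (M *ᵥ v) = enorm3 v := by
  rw [enorm3_eq_sqrt_dotProduct, enorm3_eq_sqrt_dotProduct, dotProduct_mulVec,
    ← mulVec_transpose, mulVec_mulVec, hM, one_mulVec]

lemma normalize3_smul_of_pos {c : ℝ} (hc : 0 < c) (v : Fin 3 → ℝ) :
    normalize3 (c • v) = normalize3 v := by
  rw [normalize3, normalize3, enorm3_smul, abs_of_pos hc, smul_smul, _root_.mul_inv_rev,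
    inv_mul_cancel_right₀ hc.ne']

lemma normalize3_mulVec {M : Matrix (Fin 3) (Fin 3) ℝ} (hM : Mᵀ * M = 1) (v : Fin 3 → ℝ) :
    normalize3 (M *ᵥ v) = M *ᵥ normalize3 v := by
  rw [normalize3, normalize3, enorm3_mulVec hM, mulVec_smul]

lemma bearing_eq_normalize3 {R : Matrix (Fin 3) (Fin 3) ℝ} (hR : R * Rᵀ = 1)
    (x p : Fin 3 → ℝ) : bearing R x p = normalize3 (Rᵀ *ᵥ (p - x)) := by
  rw [bearing, normalize3, enorm3_mulVec (by rwa [transpose_transpose])]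

lemma bearing_smul_mulVec_add {R : Matrix (Fin 3) (Fin 3) ℝ} (hR : Rᵀ * R = 1) {c : ℝ}
    (hc : 0 < c) (x w : Fin 3 → ℝ) : bearing R x (c • (R *ᵥ w) + x) = normalize3 w := by
  rw [bearing_eq_normalize3 (mul_eq_one_comm.mp hR), add_sub_cancel_right, mulVec_smul,
    mulVec_mulVec, hR, one_mulVec, normalize3_smul_of_pos hc]

theorem output_equivariance_general (n : ℕ)
    (A : Matrix (Fin 3) (Fin 3) ℝ) (xA : Fin 3 → ℝ)
    (Q : Fin n → Matrix (Fin 3) (Fin 3) ℝ) (a : Fin n → ℝ)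
    (P : Matrix (Fin 3) (Fin 3) ℝ) (xP : Fin 3 → ℝ) (p : Fin n → Fin 3 → ℝ)
    (hA : Aᵀ * A = 1 ∧ A.det = 1)
    (hQ : ∀ i, (Q i)ᵀ * Q i = 1 ∧ (Q i).det = 1)
    (ha : ∀ i, 0 < a i)
    (hP : Pᵀ * P = 1 ∧ P.det = 1) :
    ∀ i, bearing (P * A) (P *ᵥ xA + xP)
        ((a i)⁻¹ • ((P * A) *ᵥ ((Q i)ᵀ *ᵥ (Pᵀ *ᵥ (p i - xP)))) + (P *ᵥ xA + xP))
      = (Q i)ᵀ *ᵥ bearing P xP (p i) := by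
  intro i
  have hPA : (P * A)ᵀ * (P * A) = 1 := by
    rw [transpose_mul, mul_assoc, ← mul_assoc Pᵀ, hP.1, one_mul, hA.1]
  have hQt : (Q i)ᵀᵀ * (Q i)ᵀ = 1 := by
    rw [transpose_transpose, mul_eq_one_comm.mp (hQ i).1]
  rw [bearing_smul_mulVec_add hPA (inv_pos.mpr (ha i)), normalize3_mulVec hQt,
    bearing_eq_normalize3 (mul_eq_one_comm.mp hP.1)]

/-- Equivariance of the combined bearing output `h` with respect to the actions `Υ` and `ρ`:
for `X = (A,(Q,a)_i) ∈ VSLAM_n(3)` and `ξ = (P, p_i) ∈ T̊_n(3)`, componentwise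
`h^i` applied to the `i`-th landmark of `Υ(X, ξ)` equals `Q_iᵀ h^i(P, p_i)`.
Here `Υ((A,(Q,a)_i),(P,p_i)) = (PA, (a_i⁻¹ R_{PA} Q_iᵀ R_Pᵀ(p_i − x_P) + x_{PA})_i)`,
with `R_{PA} = R_P R_A` and `x_{PA} = R_P x_A + x_P`, and `ρ((A,(Q,a)_i),(y_i)) = (Q_iᵀ y_i)`. -/
theorem output_equivariance (n : ℕ)
    (A : Matrix (Fin 3) (Fin 3) ℝ) (xA : Fin 3 → ℝ)
    (Q : Fin n → Matrix (Fin 3) (Fin 3) ℝ) (a : Fin n → ℝ)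
    (P : Matrix (Fin 3) (Fin 3) ℝ) (xP : Fin 3 → ℝ) (p : Fin n → Fin 3 → ℝ)
    (hA : Aᵀ * A = 1 ∧ A.det = 1)
    (hQ : ∀ i, (Q i)ᵀ * Q i = 1 ∧ (Q i).det = 1)
    (ha : ∀ i, 0 < a i)
    (hP : Pᵀ * P = 1 ∧ P.det = 1)
    (hp : ∀ i, p i ≠ xP) :
    ∀ i, bearing (P * A) (P *ᵥ xA + xP)
        ((a i)⁻¹ • ((P * A) *ᵥ ((Q i)ᵀ *ᵥ (Pᵀ *ᵥ (p i - xP)))) + (P *ᵥ xA + xP))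
      = (Q i)ᵀ *ᵥ bearing P xP (p i) :=
  output_equivariance_general n A xA Q a P xP p hA hQ ha hP
end

section
/- The key identity establishing that Λ is a lift of the VSLAM kinematics: for any nonzero q ∈ ℝ³, any 3×3 special orthogonal matrix R, and any Ω, V ∈ ℝ³, setting w = (qᵀV)/‖q‖² and W = Ω + (q × V)/‖q‖², one has −w·Rq + R(Ω × q) − R(W × q) + RV = 0. -/
open Matrix

lemma enorm3_sq (v : Fin 3 → ℝ) : enorm3 v ^ 2 = v ⬝ᵥ v := by
  rw [enorm3, EuclideanSpace.norm_sq_eq, dotProduct]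
  simp [sq]

/-- Crossing `(q × v) / ‖q‖²` with `q` recovers the component of `v` orthogonal to `q`. -/
lemma inv_dotProduct_self_smul_cross_cross_self {K : Type*} [Field K] {q : Fin 3 → K}
    (hq : q ⬝ᵥ q ≠ 0) (v : Fin 3 → K) :
    ((q ⬝ᵥ q)⁻¹ • (q ⨯₃ v)) ⨯₃ q = v - (q ⬝ᵥ v / q ⬝ᵥ q) • q := by
  rw [LinearMap.map_smul₂, cross_cross_eq_smul_sub_smul, smul_sub, smul_smul, smul_smul,
    inv_mul_cancel₀ hq, one_smul, dotProduct_comm v q, inv_mul_eq_div]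

theorem lift_identity_general (q Ω V : Fin 3 → ℝ) (R : Matrix (Fin 3) (Fin 3) ℝ)
    (hq : q ≠ 0)
    (w : ℝ) (hw : w = (q ⬝ᵥ V) / (enorm3 q) ^ 2)
    (W : Fin 3 → ℝ) (hW : W = Ω + ((enorm3 q) ^ 2)⁻¹ • (q ⨯₃ V)) :
    -(w • (R *ᵥ q)) + R *ᵥ (Ω ⨯₃ q) - R *ᵥ (W ⨯₃ q) + R *ᵥ V = 0 := by
  rw [enorm3_sq] at hw hW
  have hqq : q ⬝ᵥ q ≠ 0 := fun h => hq (dotProduct_self_eq_zero.mp h)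
  have hWq : W ⨯₃ q = Ω ⨯₃ q + V - w • q := by
    rw [hW, map_add, LinearMap.add_apply, inv_dotProduct_self_smul_cross_cross_self hqq, hw,
      add_sub_assoc]
  rw [hWq, mulVec_sub, mulVec_add, mulVec_smul]
  abel

/-- The key identity establishing that `Λ` is a lift of the VSLAM kinematics:
for nonzero `q ∈ ℝ³`, any special orthogonal `R`, and any `Ω, V ∈ ℝ³`, setting
`w = (qᵀV)/‖q‖²` and `W = Ω + (q × V)/‖q‖²`, one has
`−w·Rq + R(Ω × q) − R(W × q) + RV = 0`. -/
theorem lift_identity (q Ω V : Fin 3 → ℝ) (R : Matrix (Fin 3) (Fin 3) ℝ)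
    (hq : q ≠ 0) (hR : Rᵀ * R = 1 ∧ R.det = 1)
    (w : ℝ) (hw : w = (q ⬝ᵥ V) / (enorm3 q) ^ 2)
    (W : Fin 3 → ℝ) (hW : W = Ω + ((enorm3 q) ^ 2)⁻¹ • (q ⨯₃ V)) :
    -(w • (R *ᵥ q)) + R *ᵥ (Ω ⨯₃ q) - R *ᵥ (W ⨯₃ q) + R *ᵥ V = 0 :=
  lift_identity_general q Ω V R hq w hw W hW
end

section
/- Closed form of the Lyapunov derivative: let ẙ, δ ∈ ℝ³ be unit vectors with 1 + ẙᵀδ ≠ 0, w ∈ ℝ³, r, r̂ > 0, α > 0, k ∈ ℝ, and β ∈ ℝ. Set x = ẙᵀδ, P = ẙᵀ(w − δ(δᵀw)), and define A = −δᵀw, B = −δᵀw + αβ + (α/r̂)·( ((1 − x)/(2(1 + x)))·δᵀw − P/(1 + x)² ), and C = ((r − r̂)/(r·r̂))·P − (δᵀw/(2r̂) − k)·(1 − x²). Then (A/2)·(1 − x)/(1 + x) − r·C/(1 + x)² + (1/α)·(r − r̂)·(A − B) = −k·r·(1 − x)/(1 + x) + (r̂ − r)·β. -/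
open Matrix

theorem lyapunov_derivative_closed_form_general (yo δ w : Fin 3 → ℝ) (r rh α k β : ℝ)
    (hx : 1 + yo ⬝ᵥ δ ≠ 0)
    (hr : 0 < r) (hrh : 0 < rh) (hα : 0 < α)
    (x P A B C : ℝ)
    (hxdef : x = yo ⬝ᵥ δ)
    (hA : A = -(δ ⬝ᵥ w))
    (hB : B = -(δ ⬝ᵥ w) + α * β
        + (α / rh) * (((1 - x) / (2 * (1 + x))) * (δ ⬝ᵥ w) - P / (1 + x) ^ 2))
    (hC : C = ((r - rh) / (r * rh)) * P - ((δ ⬝ᵥ w) / (2 * rh) - k) * (1 - x ^ 2)) :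
    (A / 2) * ((1 - x) / (1 + x)) - r * C / (1 + x) ^ 2 + (1 / α) * (r - rh) * (A - B)
      = -(k * r * ((1 - x) / (1 + x))) + (rh - r) * β := by
  have hx : 1 + x ≠ 0 := hxdef ▸ hx
  subst hA hB hC
  -- The `P`-terms of `C` and `A - B` cancel, and so do the `δ ⬝ᵥ w`-terms of all three summands.
  field_simp
  ring

/-- Closed form of the Lyapunov derivative: for unit vectors `ẙ, δ` with `1 + ẙᵀδ ≠ 0`,
`w ∈ ℝ³`, `r, r̂ > 0`, `α > 0`, `k, β ∈ ℝ`, setting `x = ẙᵀδ`, `P = ẙᵀ(w − δ(δᵀw))`,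
`A = −δᵀw`,
`B = −δᵀw + αβ + (α/r̂)(((1 − x)/(2(1 + x)))·δᵀw − P/(1 + x)²)`, and
`C = ((r − r̂)/(r·r̂))·P − (δᵀw/(2r̂) − k)·(1 − x²)`, one has
`(A/2)·(1 − x)/(1 + x) − r·C/(1 + x)² + (1/α)·(r − r̂)·(A − B)
  = −k·r·(1 − x)/(1 + x) + (r̂ − r)·β`. -/
theorem lyapunov_derivative_closed_form (yo δ w : Fin 3 → ℝ) (r rh α k β : ℝ)
    (hyo : enorm3 yo = 1) (hδ : enorm3 δ = 1) (hx : 1 + yo ⬝ᵥ δ ≠ 0)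
    (hr : 0 < r) (hrh : 0 < rh) (hα : 0 < α)
    (x P A B C : ℝ)
    (hxdef : x = yo ⬝ᵥ δ)
    (hP : P = yo ⬝ᵥ (w - (δ ⬝ᵥ w) • δ))
    (hA : A = -(δ ⬝ᵥ w))
    (hB : B = -(δ ⬝ᵥ w) + α * β
        + (α / rh) * (((1 - x) / (2 * (1 + x))) * (δ ⬝ᵥ w) - P / (1 + x) ^ 2))
    (hC : C = ((r - rh) / (r * rh)) * P - ((δ ⬝ᵥ w) / (2 * rh) - k) * (1 - x ^ 2)) :
    (A / 2) * ((1 - x) / (1 + x)) - r * C / (1 + x) ^ 2 + (1 / α) * (r - rh) * (A - B)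
      = -(k * r * ((1 - x) / (1 + x))) + (rh - r) * β :=
  lyapunov_derivative_closed_form_general yo δ w r rh α k β hx hr hrh hα x P A B C hxdef hA hB hC
end
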